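/- arXiv:math/0003059 — 4 statements merged into one kernel-verified Lean document; each statement's English description precedes it below -/
import Mathlib

section
/- Let V be a 4-dimensional real vector space and let ω₊ and ω₋ be nonzero alternating bilinear forms on V satisfying ω₊ ∧ ω₊ = 0, ω₋ ∧ ω₋ = 0, and ω₊ ∧ ω₋ ≠ 0. Let rad(ω) = {v ∈ V : ω(v,w) = 0 for all w ∈ V} denote the radical of an alternating form ω. Then rad(ω₊) and rad(ω₋) are 2-dimensional subspaces of V and V = rad(ω₊) ⊕ rad(ω₋). -/
/-!
If `ω ≠ 0` is alternating with `ω ∧ ω = 0` and `ω x y ≠ 0`, the Plücker relation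
`ω x y * ω z w = ω x z * ω y w - ω x w * ω y z` shows `rad ω = ker ω(x,·) ∩ ker ω(y,·)`, and
these two functionals are independent, so `rad ω` has codimension two.
The 4-form `ω₊ ∧ ω₋` vanishes as soon as one argument lies in `rad ω₊ ∩ rad ω₋`. A nonzero such
vector `v` is a combination of any basis, so replacing one basis vector by `v` shows that the 4-form
vanishes on every basis, hence identically. Thus the radicals meet trivially, and by dimension
count they are complementary.
-/

/-- The wedge product of two alternating bilinear forms on a real vector space,
evaluated on four vectors via the (2,2)-shuffle formula. -/
def wedge22 {V : Type*} (ω η : V → V → ℝ) (x y z w : V) : ℝ :=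
  ω x y * η z w - ω x z * η y w + ω x w * η y z
    + ω y z * η x w - ω y w * η x z + ω z w * η x y

/-- The radical of a bilinear form `ω` on `V`:
`rad(ω) = {v ∈ V : ω(v,w) = 0 for all w}`, i.e. the kernel of `v ↦ ω(v,·)`. -/
noncomputable def radical {V : Type*} [AddCommGroup V] [Module ℝ V]
    (ω : V →ₗ[ℝ] V →ₗ[ℝ] ℝ) : Submodule ℝ V :=
  LinearMap.ker ω

open Module Function

theorem AlternatingMap.eq_zero_of_forall_update_eq_zero {K V N ι : Type*} [Field K]
    [AddCommGroup V] [Module K V] [FiniteDimensional K V] [AddCommGroup N] [Module K N]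
    [Fintype ι] [DecidableEq ι] (hι : Fintype.card ι = finrank K V) (f : V [⋀^ι]→ₗ[K] N)
    {v : V} (hv : v ≠ 0) (h : ∀ m i, f (update m i v) = 0) : f = 0 := by
  ext m
  by_contra hm
  have hli : LinearIndependent K m := not_imp_comm.1 (f.map_linearDependent m) hm
  obtain ⟨c, rfl⟩ : ∃ c : ι → K, ∑ i, c i • m i = v :=
    Submodule.mem_span_range_iff_exists_fun K |>.1
      (hli.span_eq_top_of_card_eq_finrank' hι ▸ Submodule.mem_top)
  have hc (i : ι) : c i = 0 := by
    have hi : f (update m i (∑ j, c j • m j)) = c i • f m := by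
      rw [f.map_update_sum, Finset.sum_eq_single i (fun j _ hji => by
        rw [f.map_update_smul, f.map_update_self m hji.symm, smul_zero]) (by simp),
        f.map_update_smul, update_eq_self]
    exact (smul_eq_zero.1 (hi ▸ h m i)).resolve_right hm
  simp [hc] at hv

lemma pluecker_of_wedge22_self_eq_zero {V : Type*} {ω : V → V → ℝ} {x y z w : V}
    (h : wedge22 ω ω x y z w = 0) : ω x y * ω z w = ω x z * ω y w - ω x w * ω y z := by
  unfold wedge22 at h
  linarith

section Radical

variable {V : Type*} [AddCommGroup V] [Module ℝ V] {ω : V →ₗ[ℝ] V →ₗ[ℝ] ℝ}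

lemma apply_eq_zero_of_mem_radical (hω : ω.IsAlt) {v : V} (hv : v ∈ radical ω) (u : V) :
    ω u v = 0 := by
  rw [← hω.neg, show ω v = 0 from hv, LinearMap.zero_apply, neg_zero]

lemma radical_eq_ker_prod (hω : ω.IsAlt)
    (hωω : ∀ x y z w : V, wedge22 (fun a b => ω a b) (fun a b => ω a b) x y z w = 0)
    {x y : V} (hxy : ω x y ≠ 0) :
    radical ω = LinearMap.ker ((ω x).prod (ω y)) := by
  ext z
  simp only [LinearMap.mem_ker, LinearMap.prod_apply, Function.prod, Prod.mk_eq_zero]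
  constructor
  · intro hz
    exact ⟨apply_eq_zero_of_mem_radical hω hz x, apply_eq_zero_of_mem_radical hω hz y⟩
  · rintro ⟨hxz, hyz⟩
    ext w
    have pluecker := pluecker_of_wedge22_self_eq_zero (hωω x y z w)
    rw [hxz, hyz] at pluecker
    simpa [hxy] using pluecker

lemma surjective_prod_of_apply_ne_zero (hω : ω.IsAlt) {x y : V} (hxy : ω x y ≠ 0) :
    Surjective ((ω x).prod (ω y)) := by
  rintro ⟨a, b⟩
  refine ⟨(a / ω x y) • y - (b / ω x y) • x, ?_⟩
  simp only [LinearMap.prod_apply, Function.prod, map_sub, map_smul, hω.self_eq_zero,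
    ← hω.neg x y, Prod.smul_mk, Prod.mk_sub_mk, smul_eq_mul, Prod.mk.injEq]
  constructor <;> field_simp <;> ring

lemma finrank_radical_add_two [FiniteDimensional ℝ V] (hω : ω.IsAlt)
    (hωω : ∀ x y z w : V, wedge22 (fun a b => ω a b) (fun a b => ω a b) x y z w = 0)
    (h0 : ω ≠ 0) : finrank ℝ (radical ω) + 2 = finrank ℝ V := by
  obtain ⟨x, y, hxy⟩ : ∃ x y, ω x y ≠ 0 := by
    by_contra! h
    exact h0 (LinearMap.ext₂ h)
  have hrank := LinearMap.finrank_range_add_finrank_ker ((ω x).prod (ω y))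
  rw [LinearMap.range_eq_top.2 (surjective_prod_of_apply_ne_zero hω hxy), finrank_top,
    finrank_prod, finrank_self, ← radical_eq_ker_prod hω hωω hxy] at hrank
  omega

variable {η : V →ₗ[ℝ] V →ₗ[ℝ] ℝ}

def wedgeAlternatingMap (hω : ω.IsAlt) (hη : η.IsAlt) : V [⋀^Fin 4]→ₗ[ℝ] ℝ where
  toFun m := wedge22 (fun a b => ω a b) (fun a b => η a b) (m 0) (m 1) (m 2) (m 3)
  map_update_add' {inst} m i x y := by
    -- `simp` decides equalities in `Fin 4` with the default instance, not an arbitrary one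
    obtain rfl := Subsingleton.elim inst (instDecidableEqFin 4)
    fin_cases i <;> simp [wedge22] <;> ring
  map_update_smul' {inst} m i c x := by
    obtain rfl := Subsingleton.elim inst (instDecidableEqFin 4)
    fin_cases i <;> simp [wedge22] <;> ring
  map_eq_zero_of_eq' m i j hij hne := by
    have hω' (p q : Fin 4) (hqp : q < p) : ω (m p) (m q) = -ω (m q) (m p) := (hω.neg _ _).symm
    have hη' (p q : Fin 4) (hqp : q < p) : η (m p) (m q) = -η (m q) (m p) := (hη.neg _ _).symm
    -- orienting every value `ω (m p) (m q)` as `q < p` gives simp a normal form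
    fin_cases i <;> fin_cases j <;> simp at hne hij <;>
      simp [wedge22, hij, hω', hη', hω.self_eq_zero, hη.self_eq_zero]

lemma wedgeAlternatingMap_apply (hω : ω.IsAlt) (hη : η.IsAlt) (m : Fin 4 → V) :
    wedgeAlternatingMap hω hη m
      = wedge22 (fun a b => ω a b) (fun a b => η a b) (m 0) (m 1) (m 2) (m 3) := rfl

lemma wedgeAlternatingMap_update_eq_zero (hω : ω.IsAlt) (hη : η.IsAlt) {v : V}
    (hvω : v ∈ radical ω) (hvη : v ∈ radical η) (m : Fin 4 → V) (i : Fin 4) :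
    wedgeAlternatingMap hω hη (update m i v) = 0 := by
  have hω₀ : ω v = 0 := hvω
  have hη₀ : η v = 0 := hvη
  fin_cases i <;> simp [wedgeAlternatingMap_apply, wedge22, hω₀, hη₀,
    apply_eq_zero_of_mem_radical hω hvω, apply_eq_zero_of_mem_radical hη hvη]

lemma disjoint_radical_of_wedge22_ne_zero [FiniteDimensional ℝ V] (hdim : finrank ℝ V = 4)
    (hω : ω.IsAlt) (hη : η.IsAlt)
    (hωη : ∃ x y z w : V, wedge22 (fun a b => ω a b) (fun a b => η a b) x y z w ≠ 0) :
    Disjoint (radical ω) (radical η) := by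
  rw [Submodule.disjoint_def]
  intro v hvω hvη
  by_contra hv
  have hzero := (wedgeAlternatingMap hω hη).eq_zero_of_forall_update_eq_zero
    (by rw [Fintype.card_fin, hdim]) hv (wedgeAlternatingMap_update_eq_zero hω hη hvω hvη)
  obtain ⟨x, y, z, w, hxyzw⟩ := hωη
  exact hxyzw (by simpa [wedgeAlternatingMap_apply] using congrArg (· ![x, y, z, w]) hzero)

end Radical

/-- If `ω₊, ω₋` are nonzero alternating bilinear forms on a 4-dimensional real
vector space with `ω₊ ∧ ω₊ = 0`, `ω₋ ∧ ω₋ = 0` and `ω₊ ∧ ω₋ ≠ 0`, then the radicals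
`rad(ω₊)` and `rad(ω₋)` are 2-dimensional and `V = rad(ω₊) ⊕ rad(ω₋)`. -/
theorem stmt1 (V : Type*) [AddCommGroup V] [Module ℝ V] [FiniteDimensional ℝ V]
    (hdim : Module.finrank ℝ V = 4)
    (ωp ωm : V →ₗ[ℝ] V →ₗ[ℝ] ℝ)
    (haltp : ∀ v : V, ωp v v = 0) (haltm : ∀ v : V, ωm v v = 0)
    (hp0 : ωp ≠ 0) (hm0 : ωm ≠ 0)
    (hpp : ∀ x y z w : V, wedge22 (fun a b => ωp a b) (fun a b => ωp a b) x y z w = 0)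
    (hmm : ∀ x y z w : V, wedge22 (fun a b => ωm a b) (fun a b => ωm a b) x y z w = 0)
    (hpm : ∃ x y z w : V, wedge22 (fun a b => ωp a b) (fun a b => ωm a b) x y z w ≠ 0) :
    Module.finrank ℝ (radical ωp) = 2 ∧ Module.finrank ℝ (radical ωm) = 2 ∧
      IsCompl (radical ωp) (radical ωm) := by
  have hp := finrank_radical_add_two haltp hpp hp0
  have hm := finrank_radical_add_two haltm hmm hm0
  have hdisj := disjoint_radical_of_wedge22_ne_zero hdim haltp haltm hpm
  exact ⟨by omega, by omega, (Submodule.isCompl_iff_disjoint _ _ (by omega)).2 hdisj⟩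
end

section
/- Let H be a 4-dimensional real vector space, Q a 2-dimensional real vector space, and L : H × H → Q an alternating ℝ-bilinear map such that for every nonzero linear functional ψ ∈ Q* the 4-form (ψ∘L) ∧ (ψ∘L) ∈ Λ⁴H* is nonzero. Then there exist complex structures J : H → H and J_Q : Q → Q (ℝ-linear maps with J ∘ J = −id and J_Q ∘ J_Q = −id) such that L(Jx, y) = J_Q(L(x,y)) for all x, y ∈ H; moreover, the pairs with this property are exactly (J, J_Q) and (−J, −J_Q), i.e. the pair is unique up to simultaneously replacing both maps by their negatives. -/
open Matrix

section Pfaffian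

variable {R : Type*} [CommRing R]

def pfaffian4 : QuadraticMap R (Matrix (Fin 4) (Fin 4) R) R :=
  LinearMap.BilinMap.toQuadraticMap <| LinearMap.mk₂ R
    (fun S T => S 0 1 * T 2 3 - S 0 2 * T 1 3 + S 0 3 * T 1 2)
    (fun _ _ _ => by simp only [Matrix.add_apply]; ring)
    (fun _ _ _ => by simp only [Matrix.smul_apply, smul_eq_mul]; ring)
    (fun _ _ _ => by simp only [Matrix.add_apply]; ring)
    (fun _ _ _ => by simp only [Matrix.smul_apply, smul_eq_mul]; ring)

theorem pfaffian4_apply (S : Matrix (Fin 4) (Fin 4) R) :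
    pfaffian4 S = S 0 1 * S 2 3 - S 0 2 * S 1 3 + S 0 3 * S 1 2 := rfl

def pfaffAdj4 (S : Matrix (Fin 4) (Fin 4) R) : Matrix (Fin 4) (Fin 4) R :=
  !![0, -S 2 3, S 1 3, -S 1 2;
     S 2 3, 0, -S 0 3, S 0 2;
     -S 1 3, S 0 3, 0, -S 0 1;
     S 1 2, -S 0 2, S 0 1, 0]

theorem pfaffAdj4_add (S T : Matrix (Fin 4) (Fin 4) R) :
    pfaffAdj4 (S + T) = pfaffAdj4 S + pfaffAdj4 T := by
  ext i j
  fin_cases i <;> fin_cases j <;> simp [pfaffAdj4] <;> ring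

theorem pfaffAdj4_transpose (S : Matrix (Fin 4) (Fin 4) R) : (pfaffAdj4 S)ᵀ = -pfaffAdj4 S := by
  ext i j
  fin_cases i <;> fin_cases j <;> simp [pfaffAdj4]

end Pfaffian

section Skew

variable {R : Type*} [CommRing R] [NoZeroDivisors R] [CharZero R]
  {S T : Matrix (Fin 4) (Fin 4) R}

theorem eq_skew_of_transpose_eq_neg (hS : Sᵀ = -S) :
    S = !![0, S 0 1, S 0 2, S 0 3;
      -S 0 1, 0, S 1 2, S 1 3;
      -S 0 2, -S 1 2, 0, S 2 3;
      -S 0 3, -S 1 3, -S 2 3, 0] := by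
  have h : ∀ i j, S j i = -S i j := fun i j => congrFun (congrFun hS i) j
  have h0 : ∀ i, S i i = 0 := fun i => CharZero.eq_neg_self_iff.mp (h i i)
  ext i j
  fin_cases i <;> fin_cases j <;> simp [h0, h 0 1, h 0 2, h 0 3, h 1 2, h 1 3, h 2 3]

theorem pfaffAdj4_mul_self (hS : Sᵀ = -S) : pfaffAdj4 S * S = pfaffian4 S • 1 := by
  rw [eq_skew_of_transpose_eq_neg hS]
  ext i j
  fin_cases i <;> fin_cases j <;>
    simp [pfaffAdj4, pfaffian4_apply, mul_apply, Fin.sum_univ_four] <;> ring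

theorem mul_pfaffAdj4_self (hS : Sᵀ = -S) : S * pfaffAdj4 S = pfaffian4 S • 1 := by
  simpa [transpose_mul, pfaffAdj4_transpose, hS] using congrArg transpose (pfaffAdj4_mul_self hS)

theorem pfaffAdj4_mul_add_pfaffAdj4_mul (hS : Sᵀ = -S) (hT : Tᵀ = -T) :
    pfaffAdj4 S * T + pfaffAdj4 T * S = QuadraticMap.polar pfaffian4 S T • 1 := by
  have hST : (S + T)ᵀ = -(S + T) := by rw [transpose_add, hS, hT, neg_add]
  have h := pfaffAdj4_mul_self hST
  rw [pfaffAdj4_add, add_mul, mul_add, mul_add, pfaffAdj4_mul_self hS, pfaffAdj4_mul_self hT] at h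
  rw [QuadraticMap.polar, sub_smul, sub_smul, ← h]
  abel

theorem pfaffian4_transpose_mul_mul (hS : Sᵀ = -S) (M : Matrix (Fin 4) (Fin 4) R) :
    pfaffian4 (Mᵀ * S * M) = M.det * pfaffian4 S := by
  rw [eq_skew_of_transpose_eq_neg hS]
  simp [pfaffian4_apply, mul_apply, det_succ_row_zero, Fin.sum_univ_succ, Fin.succAbove]
  ring

end Skew

section Field

variable {K : Type*} [Field K] [CharZero K] {S T : Matrix (Fin 4) (Fin 4) K}

theorem eq_of_transpose_mul_eq_transpose_mul (hS : Sᵀ = -S) (h0 : pfaffian4 S ≠ 0)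
    {A B : Matrix (Fin 4) (Fin 4) K} (h : Aᵀ * S = Bᵀ * S) : A = B := by
  have h' := congrArg (· * pfaffAdj4 S) h
  simp only [Matrix.mul_assoc, mul_pfaffAdj4_self hS, Matrix.mul_smul, Matrix.mul_one] at h'
  exact transpose_injective (smul_right_injective _ h0 h')

theorem exists_transpose_mul_eq (hS : Sᵀ = -S) (hT : Tᵀ = -T)
    (hST : pfaffian4 S = pfaffian4 T) (h0 : pfaffian4 S ≠ 0)
    (hpol : QuadraticMap.polar pfaffian4 S T = 0) :
    ∃ J : Matrix (Fin 4) (Fin 4) K, Jᵀ * S = T ∧ Jᵀ * T = -S := by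
  have hJ : ((pfaffian4 S)⁻¹ • (pfaffAdj4 S * T))ᵀ = (pfaffian4 S)⁻¹ • (T * pfaffAdj4 S) := by
    rw [transpose_smul, transpose_mul, hT, pfaffAdj4_transpose, neg_mul_neg]
  have hanti : pfaffAdj4 S * T = -(pfaffAdj4 T * S) := by
    rw [eq_neg_iff_add_eq_zero, pfaffAdj4_mul_add_pfaffAdj4_mul hS hT, hpol, zero_smul]
  refine ⟨(pfaffian4 S)⁻¹ • (pfaffAdj4 S * T), ?_, ?_⟩
  · rw [hJ, Matrix.smul_mul, Matrix.mul_assoc, pfaffAdj4_mul_self hS, Matrix.mul_smul,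
      Matrix.mul_one, smul_smul, inv_mul_cancel₀ h0, one_smul]
  · rw [hJ, smul_mul, Matrix.mul_assoc, hanti, Matrix.mul_neg, ← Matrix.mul_assoc,
      mul_pfaffAdj4_self hT, ← hST, Matrix.smul_mul, Matrix.one_mul, smul_neg, smul_smul,
      inv_mul_cancel₀ h0, one_smul]

end Field

section AltForm

open LinearMap (toMatrix₂ toMatrix₂_comp)

variable {K H : Type*} [Field K] [AddCommGroup H] [Module K H]
  (e : Module.Basis (Fin 4) K H) {ω ω₁ ω₂ : LinearMap.BilinForm K H}

include e in
theorem LinearMap.IsAlt.transpose_toMatrix₂ (hω : LinearMap.IsAlt ω) :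
    (toMatrix₂ e e ω)ᵀ = -toMatrix₂ e e ω := by
  ext i j
  exact (hω.neg _ _).symm

theorem comp_injective_of_pfaffian4_ne_zero [CharZero K] (hω : LinearMap.IsAlt ω)
    (h0 : pfaffian4 (toMatrix₂ e e ω) ≠ 0) :
    Function.Injective fun J : Module.End K H => ω ∘ₗ J := by
  intro A B h
  apply (LinearMap.toMatrix e e).injective
  apply eq_of_transpose_mul_eq_transpose_mul (hω.transpose_toMatrix₂ e) h0
  rw [← toMatrix₂_comp, ← toMatrix₂_comp]
  exact congrArg _ h

theorem exists_mul_self_eq_neg_one_comp_eq [CharZero K] (hω₁ : LinearMap.IsAlt ω₁)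
    (hω₂ : LinearMap.IsAlt ω₂)
    (h12 : pfaffian4 (toMatrix₂ e e ω₁) = pfaffian4 (toMatrix₂ e e ω₂))
    (h0 : pfaffian4 (toMatrix₂ e e ω₁) ≠ 0)
    (hpol : QuadraticMap.polar pfaffian4 (toMatrix₂ e e ω₁) (toMatrix₂ e e ω₂) = 0) :
    ∃ J : Module.End K H, J * J = -1 ∧ ω₁ ∘ₗ J = ω₂ ∧ ω₂ ∘ₗ J = -ω₁ := by
  obtain ⟨M, h1, h2⟩ := exists_transpose_mul_eq (hω₁.transpose_toMatrix₂ e)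
    (hω₂.transpose_toMatrix₂ e) h12 h0 hpol
  set J := Matrix.toLin e e M
  have hJ1 : ω₁ ∘ₗ J = ω₂ := by
    apply (toMatrix₂ e e).injective
    rw [toMatrix₂_comp e, LinearMap.toMatrix_toLin, h1]
  have hJ2 : ω₂ ∘ₗ J = -ω₁ := by
    apply (toMatrix₂ e e).injective
    rw [toMatrix₂_comp e, LinearMap.toMatrix_toLin, h2]
    exact (map_neg _ ω₁).symm
  refine ⟨J, comp_injective_of_pfaffian4_ne_zero e hω₁ h0 (?_ : ω₁ ∘ₗ (J * J) = ω₁ ∘ₗ (-1)),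
    hJ1, hJ2⟩
  rw [Module.End.mul_eq_comp, ← LinearMap.comp_assoc, hJ1, hJ2]
  ext; simp

end AltForm

section Gram

open LinearMap (toMatrix₂)

variable {K H ι κ : Type*} [CommRing K] [AddCommGroup H] [Module K H] [Fintype ι] [DecidableEq ι]

theorem Module.Basis.toMatrix_transpose_mul_toMatrix₂_mul_toMatrix (e : Module.Basis ι K H)
    (ω : LinearMap.BilinForm K H) (v : κ → H) :
    (e.toMatrix v)ᵀ * toMatrix₂ e e ω * e.toMatrix v = Matrix.of fun a b => ω (v a) (v b) := by
  ext a b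
  conv_rhs => rw [← Matrix.toLinearMap₂_toMatrix₂ e e ω]
  simp only [Matrix.mul_apply, Matrix.transpose_apply, Module.Basis.toMatrix_apply,
    Matrix.toLinearMap₂_apply, Matrix.of_apply, smul_eq_mul, Finset.sum_mul]
  rw [Finset.sum_comm]
  exact Finset.sum_congr rfl fun _ _ => Finset.sum_congr rfl fun _ _ => by ring

end Gram

theorem wedge22_self_eq_det_mul_pfaffian4 {H : Type*} [AddCommGroup H] [Module ℝ H]
    (e : Module.Basis (Fin 4) ℝ H)
    {ω : LinearMap.BilinForm ℝ H} (hω : LinearMap.IsAlt ω) (x y z w : H) :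
    wedge22 (fun a b => ω a b) (fun a b => ω a b) x y z w
      = 2 * ((e.toMatrix ![x, y, z, w]).det * pfaffian4 (LinearMap.toMatrix₂ e e ω)) := by
  rw [← pfaffian4_transpose_mul_mul (hω.transpose_toMatrix₂ e),
    e.toMatrix_transpose_mul_toMatrix₂_mul_toMatrix, pfaffian4_apply]
  simp only [wedge22, Matrix.of_apply, Matrix.cons_val]
  ring

theorem QuadraticMap.Anisotropic.exists_basis_apply_eq_polar_eq_zero {W : Type*} [AddCommGroup W]
    [Module ℝ W] [FiniteDimensional ℝ W] (hW : Module.finrank ℝ W = 2)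
    {P : QuadraticForm ℝ W} (hP : P.Anisotropic) :
    ∃ Ψ : Module.Basis (Fin 2) ℝ W, P (Ψ 0) = P (Ψ 1) ∧ QuadraticMap.polar P (Ψ 0) (Ψ 1) = 0 := by
  obtain ⟨w, hw, ⟨f⟩⟩ := P.equivalent_one_zero_neg_one_weighted_sum_squared
  revert w
  rw [hW]
  intro w hw f
  have hPf : ∀ v : Fin 2 → ℝ, P (f.symm v) = w 0 * (v 0 * v 0) + w 1 * (v 1 * v 1) := fun v => by
    rw [f.symm.map_app, weightedSumSquares_apply, Fin.sum_univ_two, smul_eq_mul, smul_eq_mul]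
  have hwP : ∀ v : Fin 2 → ℝ, w 0 * (v 0 * v 0) + w 1 * (v 1 * v 1) = 0 → v = 0 := fun v hv => by
    simpa using hP _ ((hPf v).trans hv)
  have hw0 : w 0 ≠ 0 := fun h => by simpa using hwP (Pi.single 0 1) (by simp [h])
  have hw1 : w 1 ≠ 0 := fun h => by simpa using hwP (Pi.single 1 1) (by simp [h])
  have hw01 : w 0 + w 1 ≠ 0 := fun h => by simpa using hwP 1 (by simpa using h)
  have hsq : ∀ i, w i ≠ 0 → w i * w i = 1 := fun i hi => by
    rcases hw i with h | h | h <;> simp [h] at hi ⊢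
  have hw_eq : w 0 = w 1 := by
    have h : (w 0 - w 1) * (w 0 + w 1) = 0 := by linear_combination hsq 0 hw0 - hsq 1 hw1
    exact sub_eq_zero.mp ((mul_eq_zero.mp h).resolve_right hw01)
  refine ⟨(Pi.basisFun ℝ (Fin 2)).map f.symm.toLinearEquiv, ?_, ?_⟩
  · change P (f.symm _) = P (f.symm _)
    simp [hPf, hw_eq]
  · change P (f.symm _ + f.symm _) - P (f.symm _) - P (f.symm _) = 0
    rw [← map_add f.symm, hPf, hPf, hPf]
    simp

theorem Module.Basis.exists_coord_eq {K V ι : Type*} [Field K] [AddCommGroup V] [Module K V]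
    [FiniteDimensional K V] [Fintype ι] [DecidableEq ι] (Ψ : Module.Basis ι K (Module.Dual K V)) :
    ∃ b : Module.Basis ι K V, ∀ i, b.coord i = Ψ i := by
  refine ⟨Ψ.dualBasis.map (Module.evalEquiv K V).symm, fun i => ?_⟩
  refine (Ψ.dualBasis.map (Module.evalEquiv K V).symm).ext fun j => ?_
  rw [Module.Basis.coord_apply, Module.Basis.repr_self, Module.Basis.map_apply,
    Module.apply_evalEquiv_symm_apply, Module.Basis.dualBasis_apply_self, Finsupp.single_apply]
  exact if_congr eq_comm rfl rfl

section QuarterTurn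

variable {R V : Type*} [CommRing R] [AddCommGroup V] [Module R V] (b : Module.Basis (Fin 2) R V)

noncomputable def Module.Basis.quarterTurn : Module.End R V := b.constr R ![b 1, -b 0]

theorem Module.Basis.quarterTurn_mul_self : b.quarterTurn * b.quarterTurn = -1 :=
  b.ext fun i => by fin_cases i <;> simp [Module.Basis.quarterTurn]

theorem Module.Basis.coord_zero_comp_quarterTurn : b.coord 0 ∘ₗ b.quarterTurn = -b.coord 1 :=
  b.ext fun i => by fin_cases i <;> simp [Module.Basis.quarterTurn]

theorem Module.Basis.coord_one_comp_quarterTurn : b.coord 1 ∘ₗ b.quarterTurn = b.coord 0 :=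
  b.ext fun i => by fin_cases i <;> simp [Module.Basis.quarterTurn]

end QuarterTurn

theorem eq_or_eq_neg_of_mul_self_eq_neg_one {A : Type*} [Ring A] [Algebra ℝ A] [Nontrivial A]
    {J : A} (hJ : J * J = -1) (a c : ℝ)
    (h : (algebraMap ℝ A a + c • J) * (algebraMap ℝ A a + c • J) = -1) :
    algebraMap ℝ A a + c • J = J ∨ algebraMap ℝ A a + c • J = -J := by
  set φ := Complex.liftAux J hJ
  have hφ : φ ⟨a, c⟩ = algebraMap ℝ A a + c • J := Complex.liftAux_apply J hJ _
  have hz : (⟨a, c⟩ : ℂ) * ⟨a, c⟩ = Complex.I * Complex.I :=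
    φ.toRingHom.injective (by simp [hφ, h])
  rcases mul_self_eq_mul_self_iff.mp hz with hz | hz <;> simp [← hφ, hz, φ]

section PfaffianForm

open LinearMap (toMatrix₂ toMatrix₂_apply)

variable {K H Q : Type*} [CommRing K] [AddCommGroup H] [Module K H] [AddCommGroup Q] [Module K Q]

/-- The paper's `L ∧ L`, up to the factor `2` and the trivialization of `Λ⁴H*` given by `e`. -/
noncomputable def pfaffianForm (e : Module.Basis (Fin 4) K H) (L : H →ₗ[K] H →ₗ[K] Q) :
    QuadraticForm K (Module.Dual K Q) :=
  pfaffian4.comp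
    { toFun := fun ψ => toMatrix₂ e e (L.compr₂ ψ)
      map_add' := fun ψ φ => by ext; simp [toMatrix₂_apply]
      map_smul' := fun c ψ => by ext; simp [toMatrix₂_apply] }

theorem pfaffianForm_apply (e : Module.Basis (Fin 4) K H) (L : H →ₗ[K] H →ₗ[K] Q)
    (ψ : Module.Dual K Q) : pfaffianForm e L ψ = pfaffian4 (toMatrix₂ e e (L.compr₂ ψ)) := rfl

theorem LinearMap.IsAlt.compr₂ {L : H →ₗ[K] H →ₗ[K] Q} (hL : L.IsAlt) (ψ : Module.Dual K Q) :
    (L.compr₂ ψ).IsAlt := fun x => by simp [hL.self_eq_zero x]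

end PfaffianForm

section Compatible

open LinearMap (toMatrix₂)

variable {H Q : Type*} [AddCommGroup H] [Module ℝ H] [AddCommGroup Q] [Module ℝ Q]
  (e : Module.Basis (Fin 4) ℝ H) {L : H →ₗ[ℝ] H →ₗ[ℝ] Q}

theorem pfaffianForm_anisotropic (hL : L.IsAlt)
    (hell : ∀ ψ : Module.Dual ℝ Q, ψ ≠ 0 →
      ∃ x y z w : H, wedge22 (fun a b => ψ (L a b)) (fun a b => ψ (L a b)) x y z w ≠ 0) :
    (pfaffianForm e L).Anisotropic := by
  intro ψ hψ
  by_contra hne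
  obtain ⟨x, y, z, w, h⟩ := hell ψ hne
  apply h
  refine (wedge22_self_eq_det_mul_pfaffian4 e (hL.compr₂ ψ) x y z w).trans ?_
  rw [← pfaffianForm_apply, hψ, mul_zero, mul_zero]

theorem ext_of_anisotropic_pfaffianForm (hP : (pfaffianForm e L).Anisotropic)
    {A B : Module.End ℝ Q} (h : ∀ x y, A (L x y) = B (L x y)) : A = B := by
  ext v
  rw [← sub_eq_zero, ← Module.forall_dual_apply_eq_zero_iff ℝ]
  intro ψ
  have hψ : ψ ∘ₗ (A - B) = 0 := hP _ <| by
    have : L.compr₂ (ψ ∘ₗ (A - B)) = 0 := by ext x y; simp [h]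
    rw [pfaffianForm_apply, this, map_zero, map_zero]
  simpa using LinearMap.congr_fun hψ v

theorem exists_mul_self_eq_neg_one_apply_eq_quarterTurn (hL : L.IsAlt)
    (b : Module.Basis (Fin 2) ℝ Q)
    (hb : pfaffianForm e L (b.coord 0) = pfaffianForm e L (b.coord 1))
    (hb0 : pfaffianForm e L (b.coord 0) ≠ 0)
    (hpol : QuadraticMap.polar (pfaffianForm e L) (b.coord 0) (b.coord 1) = 0) :
    ∃ J : Module.End ℝ H, J * J = -1 ∧ ∀ x y, L (J x) y = b.quarterTurn (L x y) := by
  obtain ⟨J, hJ, h10, h01⟩ := exists_mul_self_eq_neg_one_comp_eq e (hL.compr₂ (b.coord 1))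
    (hL.compr₂ (b.coord 0)) hb.symm (hb ▸ hb0) (by rw [QuadraticMap.polar_comm]; exact hpol)
  refine ⟨J, hJ, fun x y => b.ext_elem (Fin.forall_fin_two.mpr ⟨?_, ?_⟩)⟩
  · rw [← b.coord_apply, ← b.coord_apply, ← LinearMap.comp_apply (b.coord 0) b.quarterTurn,
      b.coord_zero_comp_quarterTurn]
    exact LinearMap.congr_fun₂ h01 x y
  · rw [← b.coord_apply, ← b.coord_apply, ← LinearMap.comp_apply (b.coord 1) b.quarterTurn,
      b.coord_one_comp_quarterTurn]
    exact LinearMap.congr_fun₂ h10 x y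

theorem eq_or_eq_neg_of_apply_eq_quarterTurn (hL : L.IsAlt) (hP : (pfaffianForm e L).Anisotropic)
    (b : Module.Basis (Fin 2) ℝ Q) {J : Module.End ℝ H} (hJ : J * J = -1)
    (hc : ∀ x y, L (J x) y = b.quarterTurn (L x y)) {J' : Module.End ℝ H} {JQ' : Module.End ℝ Q}
    (hJ' : J' * J' = -1) (hc' : ∀ x y, L (J' x) y = JQ' (L x y)) :
    (J' = J ∧ JQ' = b.quarterTurn) ∨ (J' = -J ∧ JQ' = -b.quarterTurn) := by
  have hω : pfaffian4 (toMatrix₂ e e (L.compr₂ (b.coord 0))) ≠ 0 := fun h => by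
    simpa using LinearMap.congr_fun (hP _ h) (b 0)
  set a := (b.coord 0 ∘ₗ JQ') (b 0)
  set c := (b.coord 0 ∘ₗ JQ') (b 1)
  have hcoord : b.coord 0 ∘ₗ JQ' = a • b.coord 0 + c • b.coord 1 := by
    rw [← b.sum_dual_apply_smul_coord (b.coord 0 ∘ₗ JQ'), Fin.sum_univ_two]
  have hJ'J : J' = algebraMap ℝ _ a + (-c) • J := by
    refine comp_injective_of_pfaffian4_ne_zero e (hL.compr₂ _) hω ?_
    ext x y
    have h1 := LinearMap.congr_fun hcoord (L x y)
    have h2 := LinearMap.congr_fun b.coord_zero_comp_quarterTurn (L x y)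
    simp only [LinearMap.comp_apply, LinearMap.add_apply, LinearMap.smul_apply,
      LinearMap.neg_apply, smul_eq_mul] at h1 h2
    simp only [LinearMap.comp_apply, LinearMap.compr₂_apply, hc', h1,
      Algebra.algebraMap_eq_smul_one, LinearMap.add_apply, LinearMap.smul_apply,
      Module.End.one_apply, map_add, map_smul, smul_eq_mul, hc, h2]
    ring
  have : Nontrivial H := nontrivial_of_ne (e 0) 0 (e.ne_zero 0)
  rcases eq_or_eq_neg_of_mul_self_eq_neg_one hJ a (-c) (hJ'J ▸ hJ') with h | h <;> rw [← hJ'J] at h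
  · exact .inl ⟨h, ext_of_anisotropic_pfaffianForm e hP fun x y => by rw [← hc', h, hc]⟩
  · exact .inr ⟨h, ext_of_anisotropic_pfaffianForm e hP fun x y => by
      rw [← hc', h, LinearMap.neg_apply, map_neg, LinearMap.neg_apply, hc, LinearMap.neg_apply]⟩

end Compatible

/-- **Pointwise core of Theorem 1 (elliptic case).** Let `L : H × H → Q` be an
alternating bilinear map, `dim H = 4`, `dim Q = 2`, such that for every nonzero
`ψ ∈ Q*` the 4-form `(ψ∘L) ∧ (ψ∘L)` is nonzero (ellipticity). Then there are
complex structures `J` on `H` and `JQ` on `Q` making `L` complex bilinear, i.e.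
`L(Jx,y) = JQ(L(x,y))`, and the pairs with these properties are exactly
`(J, JQ)` and `(-J, -JQ)`. -/
theorem stmt4 (H Q : Type*) [AddCommGroup H] [Module ℝ H] [FiniteDimensional ℝ H]
    [AddCommGroup Q] [Module ℝ Q] [FiniteDimensional ℝ Q]
    (hH : Module.finrank ℝ H = 4) (hQ : Module.finrank ℝ Q = 2)
    (L : H →ₗ[ℝ] H →ₗ[ℝ] Q) (halt : ∀ x : H, L x x = 0)
    (hell : ∀ ψ : Module.Dual ℝ Q, ψ ≠ 0 →
      ∃ x y z w : H,
        wedge22 (fun a b => ψ (L a b)) (fun a b => ψ (L a b)) x y z w ≠ 0) :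
    ∃ J : H →ₗ[ℝ] H, ∃ JQ : Q →ₗ[ℝ] Q,
      J ∘ₗ J = -LinearMap.id ∧ JQ ∘ₗ JQ = -LinearMap.id ∧
      (∀ x y : H, L (J x) y = JQ (L x y)) ∧
      (∀ (J' : H →ₗ[ℝ] H) (JQ' : Q →ₗ[ℝ] Q),
        J' ∘ₗ J' = -LinearMap.id → JQ' ∘ₗ JQ' = -LinearMap.id →
        (∀ x y : H, L (J' x) y = JQ' (L x y)) →
        (J' = J ∧ JQ' = JQ) ∨ (J' = -J ∧ JQ' = -JQ)) := by
  obtain ⟨e⟩ : Nonempty (Module.Basis (Fin 4) ℝ H) := ⟨Module.finBasisOfFinrankEq ℝ H hH⟩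
  have hP := pfaffianForm_anisotropic e halt hell
  obtain ⟨Ψ, hΨ, hpol⟩ :=
    hP.exists_basis_apply_eq_polar_eq_zero (by rw [Subspace.dual_finrank_eq, hQ])
  obtain ⟨b, hb⟩ := Ψ.exists_coord_eq
  have hb0 : pfaffianForm e L (b.coord 0) ≠ 0 := fun h => Ψ.ne_zero 0 (hb 0 ▸ hP _ h)
  obtain ⟨J, hJ, hc⟩ := exists_mul_self_eq_neg_one_apply_eq_quarterTurn e halt b
    (by rw [hb, hb, hΨ]) hb0 (by rw [hb, hb, hpol])
  exact ⟨J, b.quarterTurn, hJ, b.quarterTurn_mul_self, hc,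
    fun J' JQ' hJ' _ hc' => eq_or_eq_neg_of_apply_eq_quarterTurn e halt hP b hJ hc hJ' hc'⟩
end

section
/- Let H be a 2-dimensional complex vector space and ω : H × H → ℂ a nonzero alternating ℂ-bilinear form. Write ω₁ = Re ∘ ω and ω₂ = Im ∘ ω, which are real-valued alternating bilinear forms on H regarded as a 4-dimensional real vector space. Then ω₁ ∧ ω₁ ≠ 0 in Λ⁴H*, and for all real numbers s, t one has (s·ω₁ + t·ω₂) ∧ (s·ω₁ + t·ω₂) = (s² + t²)·(ω₁ ∧ ω₁). In particular (s·ω₁ + t·ω₂) ∧ (s·ω₁ + t·ω₂) ≠ 0 whenever (s,t) ≠ (0,0). -/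
/-- Let `H` be a 2-dimensional complex vector space (a 4-dimensional real vector
space) and `ω` a nonzero alternating ℂ-bilinear form on `H`, with real and
imaginary parts `ω₁ = Re ∘ ω` and `ω₂ = Im ∘ ω`. Then `ω₁ ∧ ω₁ ≠ 0` and
`(s·ω₁ + t·ω₂) ∧ (s·ω₁ + t·ω₂) = (s² + t²)·(ω₁ ∧ ω₁)` for all reals `s, t`;
in particular `(s·ω₁ + t·ω₂) ∧ (s·ω₁ + t·ω₂) ≠ 0` whenever `(s,t) ≠ (0,0)`. -/
theorem stmt9 (H : Type*) [AddCommGroup H] [Module ℂ H] [FiniteDimensional ℂ H]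
    (hH : Module.finrank ℂ H = 2)
    (ω : H →ₗ[ℂ] H →ₗ[ℂ] ℂ) (halt : ∀ x : H, ω x x = 0) (hne : ω ≠ 0) :
    (∃ x y z w : H,
      wedge22 (fun a b => (ω a b).re) (fun a b => (ω a b).re) x y z w ≠ 0) ∧
    (∀ s t : ℝ, ∀ x y z w : H,
      wedge22 (fun a b => s * (ω a b).re + t * (ω a b).im)
        (fun a b => s * (ω a b).re + t * (ω a b).im) x y z w
      = (s ^ 2 + t ^ 2) *
        wedge22 (fun a b => (ω a b).re) (fun a b => (ω a b).re) x y z w) ∧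
    (∀ s t : ℝ, (s, t) ≠ (0, 0) → ∃ x y z w : H,
      wedge22 (fun a b => s * (ω a b).re + t * (ω a b).im)
        (fun a b => s * (ω a b).re + t * (ω a b).im) x y z w ≠ 0) := by
  classical
  set b := Module.finBasisOfFinrankEq ℂ H hH with hb
  set c := ω (b 0) (b 1) with hc
  have hskew : ∀ x y : H, ω y x = - ω x y := by
    intro x y
    have h := halt (x + y)
    simp only [map_add, LinearMap.add_apply, halt, zero_add, add_zero] at h
    linear_combination h
  have hx : ∀ x : H, x = b.repr x 0 • b 0 + b.repr x 1 • b 1 := by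
    intro x
    have h := b.sum_repr x
    rw [Fin.sum_univ_two] at h
    exact h.symm
  have hrep : ∀ x y : H,
      ω x y = (b.repr x 0 * b.repr y 1 - b.repr x 1 * b.repr y 0) * c := by
    intro x y
    conv_lhs => rw [hx x, hx y]
    simp only [map_add, map_smul, LinearMap.add_apply, LinearMap.smul_apply, smul_eq_mul,
      halt, hskew (b 0) (b 1), ← hc]
    ring
  have hcne : c ≠ 0 := by
    intro h0
    apply hne
    apply LinearMap.ext; intro x; apply LinearMap.ext; intro y
    simp [hrep x y, h0]
  -- values of ω on the test vectors
  have h1 : ω (b 0) (Complex.I • b 0) = 0 := by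
    rw [map_smul, halt]; simp
  have h2 : ω (b 0) (Complex.I • b 1) = Complex.I * c := by
    rw [map_smul, ← hc, smul_eq_mul]
  have h3 : ω (b 1) (Complex.I • b 0) = -(Complex.I * c) := by
    rw [map_smul, hskew (b 0) (b 1), ← hc, smul_eq_mul]; ring
  have h4 : ω (b 1) (Complex.I • b 1) = 0 := by
    rw [map_smul, halt]; simp
  have h5 : ω (Complex.I • b 0) (Complex.I • b 1) = -c := by
    simp only [map_smul, LinearMap.smul_apply, smul_eq_mul, ← hc]
    rw [← mul_assoc, Complex.I_mul_I]; ring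
  have key : wedge22 (fun a b => (ω a b).re) (fun a b => (ω a b).re)
      (b 0) (b 1) (Complex.I • b 0) (Complex.I • b 1) = -2 * Complex.normSq c := by
    unfold wedge22
    simp only [h1, h2, h3, h4, h5, ← hc]
    simp only [Complex.normSq_apply, Complex.neg_re, Complex.mul_re, Complex.I_re,
      Complex.I_im, Complex.zero_re]
    ring
  have part2 : ∀ s t : ℝ, ∀ x y z w : H,
      wedge22 (fun a b => s * (ω a b).re + t * (ω a b).im)
        (fun a b => s * (ω a b).re + t * (ω a b).im) x y z w
      = (s ^ 2 + t ^ 2) *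
        wedge22 (fun a b => (ω a b).re) (fun a b => (ω a b).re) x y z w := by
    intro s t x y z w
    unfold wedge22
    simp only [hrep]
    simp only [Complex.mul_re, Complex.mul_im, Complex.sub_re, Complex.sub_im]
    ring
  have hq : 0 < Complex.normSq c := Complex.normSq_pos.mpr hcne
  refine ⟨⟨b 0, b 1, Complex.I • b 0, Complex.I • b 1, ?_⟩, part2, ?_⟩
  · rw [key]; nlinarith
  · intro s t hst
    have h : s ≠ 0 ∨ t ≠ 0 := by
      by_contra h
      push_neg at h
      exact hst (by simp [h.1, h.2])
    have hpos : 0 < s ^ 2 + t ^ 2 := by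
      rcases h with h | h
      · positivity
      · positivity
    refine ⟨b 0, b 1, Complex.I • b 0, Complex.I • b 1, ?_⟩
    rw [part2, key]
    exact mul_ne_zero hpos.ne' (by nlinarith)
end

section
/- Let n ≥ 1, let H be a complex vector space of complex dimension 2n, and let ω : H × H → ℂ be an alternating ℂ-bilinear form that is nondegenerate (equivalently, the n-fold complex wedge power ω^{∧n} is nonzero). Write ω₁ = Re ∘ ω and ω₂ = Im ∘ ω, which are real-valued alternating bilinear forms on H regarded as a 4n-dimensional real vector space. Then there exists a nonzero alternating 4n-form Ω ∈ Λ^{4n}H* such that for all real numbers s, t the 2n-fold wedge power satisfies (s·ω₁ + t·ω₂)^{∧2n} = (s² + t²)ⁿ · Ω. In particular, as a homogeneous real polynomial of degree 2n in (s,t) with values in the one-dimensional space Λ^{4n}H*, (s·ω₁ + t·ω₂)^{∧2n} has exactly the two complex roots s = it and s = −it, each of multiplicity n. -/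
open scoped BigOperators

/-- The `k`-fold wedge power of a bilinear form `ω` on a real vector space,
evaluated on `2k` vectors, as the full permutation sum
`∑_σ sign(σ) ∏ᵢ ω(v_{σ(2i)}, v_{σ(2i+1)})` (a fixed nonzero multiple of the
shuffle-normalised wedge power `ω^{∧k}`). -/
def wedgePow {H : Type*} (ω : H → H → ℝ) (k : ℕ) (v : Fin (2 * k) → H) : ℝ :=
  ∑ σ : Equiv.Perm (Fin (2 * k)),
    ((Equiv.Perm.sign σ : ℤ) : ℝ) *
      ∏ i : Fin k,
        ω (v (σ ⟨2 * (i : ℕ), by have := i.isLt; omega⟩))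
          (v (σ ⟨2 * (i : ℕ) + 1, by have := i.isLt; omega⟩))

/-!
Write `ω = ω₁ + i ω₂`. For `γ ∈ ℂ` with `γ² = s - i t` we have
`s ω₁(a, b) + t ω₂(a, b) = ω₁(γ a, γ b)`, so `(s ω₁ + t ω₂)^{∧2n}` is the pull-back of the top
form `ω₁^{∧2n}` under multiplication by `γ`, whose real determinant is
`|γ|^{2·2n} = (s² + t²)ⁿ`. Hence `Ω = ω₁^{∧2n}` works, and it is nonzero: a complex symplectic
basis `eᵢ, fᵢ` of `ω` yields the real symplectic basis `eᵢ, fᵢ, i eᵢ, -i fᵢ` of `ω₁`, on which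
`ω₁^{∧2n}` is the Pfaffian of the standard symplectic matrix, up to the factor `2^{2n} (2n)!`.
-/

open Equiv Finset Function Module Matrix
open scoped Kronecker

namespace Equiv.Perm

variable {α β : Type*}

lemma sign_prodShear [Fintype α] [DecidableEq α] (π : Perm α) (τ : α → Perm (Fin 2)) :
    sign (π.prodShear τ) = ∏ a, sign (τ a) := by
  have hshear : π.prodShear τ = (prodCongrRight τ).trans (prodCongrLeft fun _ => π) := rfl
  rw [hshear, sign_trans, sign_prodCongrLeft, sign_prodCongrRight, prod_const, card_univ,
    Fintype.card_fin, Int.units_sq, one_mul]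

lemma exists_eq_prodShear [Finite α] [Finite β] (b₀ : β) (σ : Perm (α × β))
    (hσ : ∀ a b b', (σ (a, b)).1 = (σ (a, b')).1) : ∃ π τ, σ = Equiv.prodShear π τ := by
  have hτ (a : α) : Bijective fun b => (σ (a, b)).2 := by
    refine Finite.injective_iff_bijective.1 fun b b' h => ?_
    simpa using σ.injective (Prod.ext (hσ a b b') h)
  have hπ : Bijective fun a => (σ (a, b₀)).1 := by
    refine Finite.injective_iff_bijective.1 fun a a' h => ?_
    obtain ⟨b, hb⟩ := (hτ a).2 (σ (a', b₀)).2
    have : σ (a, b) = σ (a', b₀) := Prod.ext ((hσ a b b₀).trans h) hb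
    exact congrArg Prod.fst (σ.injective this)
  exact ⟨.ofBijective _ hπ, fun a => .ofBijective _ (hτ a),
    Equiv.ext fun p => Prod.ext (hσ _ _ _) rfl⟩

lemma cast_sign_mul_self {R : Type*} [CommRing R] [Fintype α] [DecidableEq α] (σ : Perm α) :
    ((sign σ : ℤ) : R) * ((sign σ : ℤ) : R) = 1 := by
  rw [← Int.cast_mul, ← Units.val_mul, Int.units_mul_self, Units.val_one, Int.cast_one]

end Equiv.Perm

section Pfaffian

variable {R M ι : Type*} [CommRing R] [AddCommGroup M] [Module R M]

variable (R) in
def symplecticJ : Matrix (Fin 2) (Fin 2) R := !![0, 1; -1, 0]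

lemma symplecticJ_apply_perm (τ : Perm (Fin 2)) :
    symplecticJ R (τ 0) (τ 1) = ((Perm.sign τ : ℤ) : R) := by
  obtain rfl | rfl : τ = 1 ∨ τ = swap 0 1 := by revert τ; decide
  · simp [symplecticJ]
  · simp [symplecticJ]

/-- Up to the factor `2 ^ card ι * (card ι)!`, this is the Pfaffian of `1 ⊗ J`: only the
permutations permuting the pairs `{(i, 0), (i, 1)}` contribute, each with `1`. -/
theorem sum_sign_mul_prod_one_kronecker_symplecticJ [Fintype ι] [DecidableEq ι] :
    ∑ σ : Perm (ι × Fin 2), ((Perm.sign σ : ℤ) : R) *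
      ∏ i, ((1 : Matrix ι ι R) ⊗ₖ symplecticJ R) (σ (i, 0)) (σ (i, 1)) =
      2 ^ Fintype.card ι * (Fintype.card ι).factorial := by
  set T : Perm (ι × Fin 2) → R := fun σ => ((Perm.sign σ : ℤ) : R) *
    ∏ i, ((1 : Matrix ι ι R) ⊗ₖ symplecticJ R) (σ (i, 0)) (σ (i, 1))
  have shear_injective : Injective fun p : Perm ι × (ι → Perm (Fin 2)) => p.1.prodShear p.2 := by
    rintro ⟨π, τ⟩ ⟨π', τ'⟩ h
    have h' (i : ι) (a : Fin 2) : π i = π' i ∧ τ i a = τ' i a :=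
      Prod.ext_iff.1 (DFunLike.congr_fun h (i, a))
    exact Prod.ext (Equiv.ext fun i => (h' i 0).1) (funext fun i => Equiv.ext (h' i · |>.2))
  have T_shear (π : Perm ι) (τ : ι → Perm (Fin 2)) : T (π.prodShear τ) = 1 := by
    simp only [T, prodShear_apply, kronecker_apply, one_apply_eq, one_mul,
      symplecticJ_apply_perm, Perm.sign_prodShear, Units.coe_prod, Int.cast_prod,
      ← prod_mul_distrib, Perm.cast_sign_mul_self, prod_const_one]
  have T_eq_zero (σ : Perm (ι × Fin 2))
      (hσ : σ ∉ Set.range fun p : Perm ι × (ι → Perm (Fin 2)) => p.1.prodShear p.2) :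
      T σ = 0 := by
    by_contra hT
    have hpair (i : ι) : (σ (i, 0)).1 = (σ (i, 1)).1 := by
      by_contra hne
      exact hT (mul_eq_zero_of_right _ (prod_eq_zero (mem_univ i) (by simp [one_apply_ne hne])))
    obtain ⟨π, τ, rfl⟩ := Perm.exists_eq_prodShear 0 σ fun i a b => by
      fin_cases a <;> fin_cases b <;> simp [hpair i]
    exact hσ ⟨(π, τ), rfl⟩
  rw [← Fintype.sum_of_injective _ shear_injective (fun _ => 1) T T_eq_zero
    fun p => (T_shear p.1 p.2).symm]
  simp [Fintype.card_perm, mul_comm]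

lemma prod_apply_update_pair [Fintype ι] [DecidableEq ι] [DecidableEq (ι × Fin 2)]
    (B : M →ₗ[R] M →ₗ[R] R) (m : ι × Fin 2 → M) (j : ι) (a : Fin 2) (x : M) :
    ∏ i, B (update m (j, a) x (i, 0)) (update m (j, a) x (i, 1)) =
      ![B.flip (m (j, 1)), B (m (j, 0))] a x * ∏ i ∈ univ.erase j, B (m (i, 0)) (m (i, 1)) := by
  rw [← mul_prod_erase univ _ (mem_univ j)]
  congr 1
  · fin_cases a <;> simp [update_of_ne]
  · refine prod_congr rfl fun i hi => ?_
    have hij : i ≠ j := ne_of_mem_erase hi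
    rw [update_of_ne (by simp [hij]), update_of_ne (by simp [hij])]

variable (ι) in
def pairProd [Fintype ι] (B : M →ₗ[R] M →ₗ[R] R) :
    MultilinearMap R (fun _ : ι × Fin 2 => M) R where
  toFun m := ∏ i, B (m (i, 0)) (m (i, 1))
  map_update_add' m p x y := by
    classical
    simp only [prod_apply_update_pair, map_add, add_mul]
  map_update_smul' m p c x := by
    classical
    simp only [prod_apply_update_pair, map_smul, smul_eq_mul, mul_assoc]

def pairFamily (u w : ι → M) : ι × Fin 2 → M := fun p => ![u p.1, w p.1] p.2

structure IsSymplecticFamily [DecidableEq ι] (B : M →ₗ[R] M →ₗ[R] R) (u w : ι → M) : Prop where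
  left_left : ∀ i j, B (u i) (u j) = 0
  right_right : ∀ i j, B (w i) (w j) = 0
  left_right : ∀ i j, B (u i) (w j) = if i = j then 1 else 0

namespace IsSymplecticFamily

variable [DecidableEq ι] {B : M →ₗ[R] M →ₗ[R] R} {u w : ι → M}

lemma comp_injective {κ : Type*} [DecidableEq κ] (h : IsSymplecticFamily B u w) {e : κ → ι}
    (he : Injective e) : IsSymplecticFamily B (u ∘ e) (w ∘ e) where
  left_left i j := h.left_left _ _
  right_right i j := h.right_right _ _
  left_right i j := by simp [h.left_right, he.eq_iff]

lemma cons (hB : B.IsAlt) {k : ℕ} {u w : Fin k → M} (h : IsSymplecticFamily B u w) {x y : M}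
    (hxy : B x y = 1) (hu : ∀ i, B x (u i) = 0 ∧ B y (u i) = 0)
    (hw : ∀ i, B x (w i) = 0 ∧ B y (w i) = 0) :
    IsSymplecticFamily B (Fin.cons x u) (Fin.cons y w) := by
  refine ⟨?_, ?_, ?_⟩ <;>
    simp [Fin.forall_fin_succ, hB.self_eq_zero, hxy, hu, hw, h.left_left, h.right_right,
      h.left_right, ← hB.neg x, ← hB.neg y, Fin.succ_ne_zero, (Fin.succ_ne_zero _).symm]

lemma apply_pairFamily (h : IsSymplecticFamily B u w) (hB : B.IsAlt) (p q : ι × Fin 2) :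
    B (pairFamily u w p) (pairFamily u w q) = ((1 : Matrix ι ι R) ⊗ₖ symplecticJ R) p q := by
  obtain ⟨i, a⟩ := p
  obtain ⟨j, b⟩ := q
  fin_cases a <;> fin_cases b <;>
    simp [pairFamily, symplecticJ, one_apply, h.left_left, h.right_right, h.left_right,
      ← hB.neg (u j), eq_comm (a := j)]

lemma alternatization_pairProd_pairFamily [Fintype ι] (h : IsSymplecticFamily B u w)
    (hB : B.IsAlt) :
    (pairProd ι B).alternatization (pairFamily u w) =
      2 ^ Fintype.card ι * (Fintype.card ι).factorial := by
  rw [MultilinearMap.alternatization_apply, ← sum_sign_mul_prod_one_kronecker_symplecticJ]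
  refine sum_congr rfl fun σ _ => ?_
  simp only [MultilinearMap.domDomCongr_apply, Units.smul_def, zsmul_eq_mul, pairProd,
    MultilinearMap.coe_mk, h.apply_pairFamily hB]

end IsSymplecticFamily

end Pfaffian

section SymplecticBasis

variable {K V : Type*} [Field K] [AddCommGroup V] [Module K V] {B : V →ₗ[K] V →ₗ[K] K}

lemma LinearMap.SeparatingLeft.exists_apply_eq_one (hB : B.SeparatingLeft) {x : V} (hx : x ≠ 0) :
    ∃ y, B x y = 1 := by
  obtain ⟨y, hy⟩ : ∃ y, B x y ≠ 0 := by
    by_contra! h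
    exact hx (hB x h)
  exact ⟨(B x y)⁻¹ • y, by rw [map_smul, smul_eq_mul, inv_mul_cancel₀ hy]⟩

namespace LinearMap.IsAlt

lemma surjective_prod_of_apply_eq_one (hB : B.IsAlt) {x y : V} (hxy : B x y = 1) :
    Surjective ((B x).prod (B y)) := fun p => ⟨p.1 • y - p.2 • x, by
  simp [hxy, hB.self_eq_zero, ← hB.neg x y]⟩

lemma finrank_ker_inf_ker_add_two [FiniteDimensional K V] (hB : B.IsAlt) {x y : V}
    (hxy : B x y = 1) : finrank K ↥(LinearMap.ker (B x) ⊓ LinearMap.ker (B y)) + 2 = finrank K V := by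
  rw [← LinearMap.ker_prod, ← LinearMap.finrank_range_add_finrank_ker ((B x).prod (B y)),
    LinearMap.range_eq_top_of_surjective _ (hB.surjective_prod_of_apply_eq_one hxy), finrank_top,
    finrank_prod, finrank_self, add_comm]

lemma separatingLeft_domRestrict_ker_inf_ker (hB : B.IsAlt) (hnd : B.SeparatingLeft) {x y : V}
    (hxy : B x y = 1) :
    (B.domRestrict₁₂ (LinearMap.ker (B x) ⊓ LinearMap.ker (B y))
      (LinearMap.ker (B x) ⊓ LinearMap.ker (B y))).SeparatingLeft := by
  rintro ⟨z, hzx, hzy⟩ hzW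
  rw [SetLike.mem_coe, LinearMap.mem_ker, ← hB.neg, neg_eq_zero] at hzx hzy
  refine Subtype.ext (hnd z fun v => ?_)
  -- `v` differs from an element of `ker (B x) ⊓ ker (B y)` by a combination of `x` and `y`
  have hv : v - B x v • y + B y v • x ∈ LinearMap.ker (B x) ⊓ LinearMap.ker (B y) := by
    simp [hxy, hB.self_eq_zero, ← hB.neg x y]
  have h := hzW ⟨_, hv⟩
  rw [LinearMap.domRestrict₁₂_apply] at h
  simpa [hzx, hzy] using h

theorem exists_isSymplecticFamily [FiniteDimensional K V] (hB : B.IsAlt) (hnd : B.SeparatingLeft)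
    {k : ℕ} (hk : finrank K V = 2 * k) : ∃ u w : Fin k → V, IsSymplecticFamily B u w := by
  induction k generalizing V with
  | zero => exact ⟨Fin.elim0, Fin.elim0, ⟨fun i => i.elim0, fun i => i.elim0, fun i => i.elim0⟩⟩
  | succ k ih =>
    obtain ⟨x, hx⟩ := (finrank_pos_iff_exists_ne_zero (R := K)).1 (by omega : 0 < finrank K V)
    obtain ⟨y, hxy⟩ := hnd.exists_apply_eq_one hx
    have hrank := hB.finrank_ker_inf_ker_add_two hxy
    set W := LinearMap.ker (B x) ⊓ LinearMap.ker (B y)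
    obtain ⟨u, w, huw⟩ := ih (B := B.domRestrict₁₂ W W) (fun z => hB z)
      (hB.separatingLeft_domRestrict_ker_inf_ker hnd hxy) (by omega)
    have hW (z : W) : B x z = 0 ∧ B y z = 0 := z.2
    exact ⟨_, _, IsSymplecticFamily.cons hB (u := W.subtype ∘ u) (w := W.subtype ∘ w)
      ⟨huw.1, huw.2, huw.3⟩ hxy (fun i => hW _) (fun i => hW _)⟩

end LinearMap.IsAlt

end SymplecticBasis

section Complex

variable {V : Type*} [AddCommGroup V] [Module ℂ V]

noncomputable def reForm (ω : V →ₗ[ℂ] V →ₗ[ℂ] ℂ) : V →ₗ[ℝ] V →ₗ[ℝ] ℝ :=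
  (ω.restrictScalars₁₂ ℝ ℝ).compr₂ Complex.reLm

@[simp]
lemma reForm_apply (ω : V →ₗ[ℂ] V →ₗ[ℂ] ℂ) (x y : V) : reForm ω x y = (ω x y).re := rfl

lemma LinearMap.IsAlt.reForm {ω : V →ₗ[ℂ] V →ₗ[ℂ] ℂ} (hω : ω.IsAlt) : (reForm ω).IsAlt :=
  fun x => by simp [hω.self_eq_zero]

lemma IsSymplecticFamily.reForm_sumElim {ι : Type*} [DecidableEq ι] {ω : V →ₗ[ℂ] V →ₗ[ℂ] ℂ}
    {u w : ι → V} (h : IsSymplecticFamily ω u w) :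
    IsSymplecticFamily (reForm ω) (Sum.elim u (Complex.I • u)) (Sum.elim w (-Complex.I • w)) := by
  refine ⟨?_, ?_, ?_⟩ <;> rintro (i | i) (j | j) <;>
    simp [h.left_left, h.right_right, h.left_right, apply_ite]

lemma Complex.det_restrictScalars_smul_id [FiniteDimensional ℂ V] (γ : ℂ) :
    LinearMap.det ((γ • LinearMap.id : V →ₗ[ℂ] V).restrictScalars ℝ) = normSq γ ^ finrank ℂ V := by
  rw [LinearMap.det_restrictScalars, LinearMap.det_smul, LinearMap.det_id, mul_one, map_pow,
    Algebra.norm_complex_apply]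

end Complex

lemma AlternatingMap.apply_comp_eq_det_mul {K W ι : Type*} [Field K] [AddCommGroup W] [Module K W]
    [FiniteDimensional K W] [Fintype ι] [DecidableEq ι] (f : W [⋀^ι]→ₗ[K] K)
    (hι : Fintype.card ι = finrank K W) (g : W →ₗ[K] W) (v : ι → W) :
    f (g ∘ v) = LinearMap.det g * f v := by
  let b := (Module.finBasis K W).reindex (Fintype.equivFinOfCardEq hι).symm
  rw [f.eq_smul_basis_det b]
  simp only [AlternatingMap.smul_apply, smul_eq_mul, b.det_comp]
  ring

section WedgePow

def pairIndex (k : ℕ) : Fin k × Fin 2 ≃ Fin (2 * k) :=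
  finProdFinEquiv.trans (finCongr (mul_comm k 2))

lemma pairIndex_symm_zero {k : ℕ} (i : Fin k) :
    (pairIndex k).symm ⟨2 * (i : ℕ), by omega⟩ = (i, 0) := by
  rw [Equiv.symm_apply_eq]; ext; simp [pairIndex]

lemma pairIndex_symm_one {k : ℕ} (i : Fin k) :
    (pairIndex k).symm ⟨2 * (i : ℕ) + 1, by omega⟩ = (i, 1) := by
  rw [Equiv.symm_apply_eq]; ext; simp [pairIndex, add_comm]

variable {H : Type*} [AddCommGroup H]

lemma wedgePow_eq_alternatization_pairProd [Module ℝ H] (B : H →ₗ[ℝ] H →ₗ[ℝ] ℝ) (k : ℕ)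
    (v : Fin (2 * k) → H) :
    wedgePow (fun a b => B a b) k v = (pairProd (Fin k) B).alternatization (v ∘ pairIndex k) := by
  rw [MultilinearMap.alternatization_apply, wedgePow, eq_comm]
  refine Fintype.sum_equiv (pairIndex k).permCongr _ _ fun σ => ?_
  simp only [MultilinearMap.domDomCongr_apply, Units.smul_def, zsmul_eq_mul, pairProd,
    MultilinearMap.coe_mk, Function.comp_apply, Perm.sign_permCongr, permCongr_apply,
    pairIndex_symm_zero, pairIndex_symm_one]

lemma wedgePow_smul [Module ℂ H] [FiniteDimensional ℂ H] (B : H →ₗ[ℝ] H →ₗ[ℝ] ℝ) {k : ℕ}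
    (hk : finrank ℂ H = k) (γ : ℂ) (v : Fin (2 * k) → H) :
    wedgePow (fun a b => B a b) k (γ • v) =
      Complex.normSq γ ^ k * wedgePow (fun a b => B a b) k v := by
  have hγv : (γ • v) ∘ pairIndex k =
      ((γ • LinearMap.id : H →ₗ[ℂ] H).restrictScalars ℝ) ∘ (v ∘ pairIndex k) := rfl
  rw [wedgePow_eq_alternatization_pairProd, wedgePow_eq_alternatization_pairProd, hγv,
    AlternatingMap.apply_comp_eq_det_mul _ (by simp [finrank_real_of_complex, hk, mul_comm]),
    Complex.det_restrictScalars_smul_id, hk]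

end WedgePow

theorem stmt11_general (n : ℕ) (H : Type*) [AddCommGroup H] [Module ℂ H]
    [FiniteDimensional ℂ H] (hH : Module.finrank ℂ H = 2 * n)
    (ω : H →ₗ[ℂ] H →ₗ[ℂ] ℂ) (halt : ∀ x : H, ω x x = 0)
    (hnd : ∀ x : H, (∀ y : H, ω x y = 0) → x = 0) :
    ∃ Ω : (Fin (2 * (2 * n)) → H) → ℝ,
      (∃ v : Fin (2 * (2 * n)) → H, Ω v ≠ 0) ∧
      ∀ (s t : ℝ) (v : Fin (2 * (2 * n)) → H),
        wedgePow (fun a b => s * (ω a b).re + t * (ω a b).im) (2 * n) v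
          = (s ^ 2 + t ^ 2) ^ n * Ω v := by
  refine ⟨wedgePow (fun a b => reForm ω a b) (2 * n), ?_, fun s t v => ?_⟩
  · obtain ⟨u, w, huw⟩ := LinearMap.IsAlt.exists_isSymplecticFamily halt hnd hH
    let e : Fin (2 * n) ≃ Fin n ⊕ Fin n := (finSumFinEquiv.trans (finCongr (two_mul n).symm)).symm
    obtain ⟨u', w', hre⟩ : ∃ u' w' : Fin (2 * n) → H, IsSymplecticFamily (reForm ω) u' w' :=
      ⟨_, _, huw.reForm_sumElim.comp_injective e.injective⟩
    refine ⟨pairFamily u' w' ∘ (pairIndex (2 * n)).symm, ?_⟩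
    rw [wedgePow_eq_alternatization_pairProd, comp_assoc, symm_comp_self, comp_id,
      hre.alternatization_pairProd_pairFamily (LinearMap.IsAlt.reForm halt)]
    positivity
  · obtain ⟨γ, hγ⟩ := IsAlgClosed.exists_pow_nat_eq (s + ((-t : ℝ) : ℂ) * Complex.I) two_pos
    have hform : (fun a b => s * (ω a b).re + t * (ω a b).im) =
        fun a b => reForm ω (γ • a) (γ • b) := by
      ext a b
      simp [← mul_assoc, ← sq, hγ]
    have hnorm : Complex.normSq γ ^ (2 * n) = (s ^ 2 + t ^ 2) ^ n := by
      rw [pow_mul, ← map_pow, hγ, Complex.normSq_add_mul_I, neg_sq]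
    rw [hform, ← hnorm]
    exact wedgePow_smul (reForm ω) hH γ v

/-- **Higher dimensions.** Let `H` be a complex vector space of complex dimension
`2n` and `ω` a nondegenerate alternating ℂ-bilinear form on `H`, with real and
imaginary parts `ω₁, ω₂` on the underlying `4n`-dimensional real vector space.
Then there is a nonzero alternating `4n`-form `Ω` with
`(s·ω₁ + t·ω₂)^{∧2n} = (s² + t²)ⁿ · Ω` for all reals `s, t`; in particular this
degree-`2n` polynomial in `(s,t)` has exactly the two complex roots `s = ±it`,
each of multiplicity `n`. -/
theorem stmt11 (n : ℕ) (hn : 1 ≤ n) (H : Type*) [AddCommGroup H] [Module ℂ H]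
    [FiniteDimensional ℂ H] (hH : Module.finrank ℂ H = 2 * n)
    (ω : H →ₗ[ℂ] H →ₗ[ℂ] ℂ) (halt : ∀ x : H, ω x x = 0)
    (hnd : ∀ x : H, (∀ y : H, ω x y = 0) → x = 0) :
    ∃ Ω : (Fin (2 * (2 * n)) → H) → ℝ,
      (∃ v : Fin (2 * (2 * n)) → H, Ω v ≠ 0) ∧
      ∀ (s t : ℝ) (v : Fin (2 * (2 * n)) → H),
        wedgePow (fun a b => s * (ω a b).re + t * (ω a b).im) (2 * n) v
          = (s ^ 2 + t ^ 2) ^ n * Ω v :=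
  stmt11_general n H hH ω halt hnd
end
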